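/- Let P = {x ∈ ℝⁿ : Ax = b, Bx ≤ d} and c ∈ ℝⁿ. Let x₀ ∈ P, let y be a steepest-descent augmenting direction at x₀ (y is strictly feasible at x₀, By ≠ 0, and cᵀy/‖By‖₁ ≤ cᵀz/‖Bz‖₁ for every z strictly feasible at x₀ with Bz ≠ 0) with cᵀy < 0, let α > 0 be such that x₁ := x₀ + αy ∈ P and x₀ + α'y ∉ P for all α' > α, and let y' be a steepest-descent augmenting direction at x₁. Then the steepness of consecutive steepest-descent directions is non-increasing in magnitude: cᵀy/‖By‖₁ ≤ cᵀy'/‖By'‖₁. -/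

import Mathlib

/-!
Write `z = α y + β y'`, where `x₁ + β y' ∈ P`. Then `x₀ + z ∈ P`, so `z` competes with `y` at `x₀`,
and `‖Bz‖₁ ≤ α ‖By‖₁ + β ‖By'‖₁`. As the steepness `s` of `y` is negative, `s ≤ cᵀz / ‖Bz‖₁` gives
`s (α ‖By‖₁ + β ‖By'‖₁) ≤ α cᵀy + β cᵀy'`, i.e. `s ‖By'‖₁ ≤ cᵀy'`. If `Bz = 0` instead, then `z` lies in
the lineality space of `P`, and steepness of `y'` forces `cᵀz ≥ 0`, whence `cᵀy' > 0`.
-/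

open Finset Matrix

/-- `y` is strictly feasible at `x₀` with respect to the set `P`. -/
def StrictlyFeasible {n : ℕ} (P : Set (Fin n → ℝ)) (x₀ y : Fin n → ℝ) : Prop :=
  ∃ α : ℝ, 0 < α ∧ x₀ + α • y ∈ P

/-- `y` is a steepest-descent augmenting direction at `x₀` with respect to `P`, `B`, `c`. -/
def IsSteepestDescentDirection {n mB : ℕ} (P : Set (Fin n → ℝ))
    (B : Matrix (Fin mB) (Fin n) ℝ) (c : Fin n → ℝ) (x₀ y : Fin n → ℝ) : Prop :=
  StrictlyFeasible P x₀ y ∧ B.mulVec y ≠ 0 ∧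
    ∀ z : Fin n → ℝ, StrictlyFeasible P x₀ z → B.mulVec z ≠ 0 →
      c ⬝ᵥ y / (∑ i, |B.mulVec y i|) ≤ c ⬝ᵥ z / (∑ i, |B.mulVec z i|)

def polyhedron {m k n : Type*} [Fintype n] (A : Matrix m n ℝ) (b : m → ℝ) (B : Matrix k n ℝ)
    (d : k → ℝ) : Set (n → ℝ) :=
  {x | A *ᵥ x = b ∧ ∀ i, (B *ᵥ x) i ≤ d i}

section Polyhedron

variable {m k n : Type*} [Fintype n] {A : Matrix m n ℝ} {b : m → ℝ} {B : Matrix k n ℝ}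
  {d : k → ℝ} {x z : n → ℝ}

lemma add_mem_polyhedron (hx : x ∈ polyhedron A b B d) (hAz : A *ᵥ z = 0) (hBz : B *ᵥ z = 0) :
    x + z ∈ polyhedron A b B d := by
  refine ⟨?_, fun i => ?_⟩
  · rw [mulVec_add, hAz, add_zero]
    exact hx.1
  · rw [mulVec_add, hBz, add_zero]
    exact hx.2 i

lemma mulVec_eq_zero_of_mem_polyhedron_of_add_mem (hx : x ∈ polyhedron A b B d)
    (hxz : x + z ∈ polyhedron A b B d) : A *ᵥ z = 0 := by
  have h := hxz.1
  rwa [mulVec_add, hx.1, add_eq_left] at h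

end Polyhedron

lemma sum_abs_pos_of_ne_zero {ι : Type*} [Fintype ι] {v : ι → ℝ} (hv : v ≠ 0) :
    0 < ∑ i, |v i| := by
  obtain ⟨i, hi⟩ := Function.ne_iff.mp hv
  exact sum_pos' (fun j _ => abs_nonneg _) ⟨i, mem_univ i, abs_pos.mpr hi⟩

lemma sum_abs_smul_add_smul_le {ι : Type*} [Fintype ι] {α β : ℝ} (hα : 0 ≤ α) (hβ : 0 ≤ β)
    (u v : ι → ℝ) : ∑ i, |(α • u + β • v) i| ≤ α * ∑ i, |u i| + β * ∑ i, |v i| := by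
  rw [mul_sum, mul_sum, ← sum_add_distrib]
  refine sum_le_sum fun i _ => ?_
  calc |(α • u + β • v) i| ≤ |α * u i| + |β * v i| := abs_add_le _ _
    _ = α * |u i| + β * |v i| := by rw [abs_mul, abs_mul, abs_of_nonneg hα, abs_of_nonneg hβ]

lemma div_le_div_of_le_mediant {a a' N N' M α β : ℝ} (hN : 0 < N) (hN' : 0 < N') (hM : 0 < M)
    (hβ : 0 < β) (ha : a ≤ 0) (hMN : M ≤ α * N + β * N')
    (h : a / N ≤ (α * a + β * a') / M) : a / N ≤ a' / N' := by
  set s := a / N with hs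
  have ha_eq : a = s * N := by rw [hs, div_mul_cancel₀ _ hN.ne']
  have hsM : s * M ≤ α * a + β * a' := (le_div_iff₀ hM).mp h
  have hs_nonpos : s ≤ 0 := div_nonpos_of_nonpos_of_nonneg ha hN.le
  have hsN := mul_le_mul_of_nonpos_left hMN hs_nonpos
  rw [ha_eq] at hsM
  have : β * (s * N') ≤ β * a' := by linarith
  exact (le_div_iff₀ hN').mpr (le_of_mul_le_mul_left this hβ)

lemma IsSteepestDescentDirection.dotProduct_nonneg_of_mulVec_eq_zero {n mA mB : ℕ}
    {A : Matrix (Fin mA) (Fin n) ℝ} {B : Matrix (Fin mB) (Fin n) ℝ} {b : Fin mA → ℝ}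
    {d : Fin mB → ℝ} {c x y z : Fin n → ℝ}
    (hy : IsSteepestDescentDirection (polyhedron A b B d) B c x y)
    (hAz : A *ᵥ z = 0) (hBz : B *ᵥ z = 0) : 0 ≤ c ⬝ᵥ z := by
  obtain ⟨⟨β, hβ, hβP⟩, hBy, hmin⟩ := hy
  have hfeas : StrictlyFeasible (polyhedron A b B d) x (y + z) := by
    refine ⟨β, hβ, ?_⟩
    rw [smul_add, ← add_assoc]
    exact add_mem_polyhedron hβP (by rw [mulVec_smul, hAz, smul_zero])
      (by rw [mulVec_smul, hBz, smul_zero])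
  have hByz : B *ᵥ (y + z) = B *ᵥ y := by rw [mulVec_add, hBz, add_zero]
  have h := hmin (y + z) hfeas (hByz ▸ hBy)
  rw [hByz, dotProduct_add, div_le_div_iff_of_pos_right (sum_abs_pos_of_ne_zero hBy)] at h
  linarith

theorem steepness_nonincreasing_general
    (n mA mB : ℕ) (A : Matrix (Fin mA) (Fin n) ℝ) (B : Matrix (Fin mB) (Fin n) ℝ)
    (b : Fin mA → ℝ) (d : Fin mB → ℝ) (c : Fin n → ℝ)
    (P : Set (Fin n → ℝ))
    (hP : P = {x | A.mulVec x = b ∧ ∀ i, B.mulVec x i ≤ d i})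
    (x₀ : Fin n → ℝ) (hx₀ : x₀ ∈ P)
    (y : Fin n → ℝ) (hy : IsSteepestDescentDirection P B c x₀ y)
    (hcy : c ⬝ᵥ y < 0)
    (α : ℝ) (hα : 0 < α)
    (x₁ : Fin n → ℝ) (hx₁ : x₁ = x₀ + α • y)
    (y' : Fin n → ℝ) (hy' : IsSteepestDescentDirection P B c x₁ y') :
    c ⬝ᵥ y / (∑ i, |B.mulVec y i|) ≤ c ⬝ᵥ y' / (∑ i, |B.mulVec y' i|) := by
  change P = polyhedron A b B d at hP
  subst hP hx₁
  obtain ⟨β, hβ, hβP⟩ := hy'.1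
  set z := α • y + β • y' with hz
  have hzP : x₀ + z ∈ polyhedron A b B d := by rwa [hz, ← add_assoc]
  have hcz : c ⬝ᵥ z = α * c ⬝ᵥ y + β * c ⬝ᵥ y' := by
    simp only [hz, dotProduct_add, dotProduct_smul, smul_eq_mul]
  have hNy := sum_abs_pos_of_ne_zero hy.2.1
  by_cases hBz : B *ᵥ z = 0
  · have hcz_nonneg := hy'.dotProduct_nonneg_of_mulVec_eq_zero
      (mulVec_eq_zero_of_mem_polyhedron_of_add_mem hx₀ hzP) hBz
    have hcy' : 0 ≤ c ⬝ᵥ y' := by nlinarith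
    exact (div_neg_of_neg_of_pos hcy hNy).le.trans (div_nonneg hcy' (sum_nonneg fun i _ => abs_nonneg _))
  · have hsteep := hy.2.2 z ⟨1, one_pos, by rwa [one_smul]⟩ hBz
    have hBz_eq : B *ᵥ z = α • B *ᵥ y + β • B *ᵥ y' := by
      simp only [hz, mulVec_add, mulVec_smul]
    rw [hcz] at hsteep
    refine div_le_div_of_le_mediant hNy (sum_abs_pos_of_ne_zero hy'.2.1)
      (sum_abs_pos_of_ne_zero hBz) hβ hcy.le ?_ hsteep
    rw [hBz_eq]
    exact sum_abs_smul_add_smul_le hα.le hβ.le _ _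

/-- Along a steepest-descent augmentation scheme, the steepness of consecutive
steepest-descent directions is non-increasing in magnitude. -/
theorem steepness_nonincreasing
    (n mA mB : ℕ) (A : Matrix (Fin mA) (Fin n) ℝ) (B : Matrix (Fin mB) (Fin n) ℝ)
    (b : Fin mA → ℝ) (d : Fin mB → ℝ) (c : Fin n → ℝ)
    (P : Set (Fin n → ℝ))
    (hP : P = {x | A.mulVec x = b ∧ ∀ i, B.mulVec x i ≤ d i})
    (x₀ : Fin n → ℝ) (hx₀ : x₀ ∈ P)
    (y : Fin n → ℝ) (hy : IsSteepestDescentDirection P B c x₀ y)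
    (hcy : c ⬝ᵥ y < 0)
    (α : ℝ) (hα : 0 < α)
    (x₁ : Fin n → ℝ) (hx₁ : x₁ = x₀ + α • y)
    (hx₁P : x₁ ∈ P)
    (hmax : ∀ α' : ℝ, α < α' → x₀ + α' • y ∉ P)
    (y' : Fin n → ℝ) (hy' : IsSteepestDescentDirection P B c x₁ y') :
    c ⬝ᵥ y / (∑ i, |B.mulVec y i|) ≤ c ⬝ᵥ y' / (∑ i, |B.mulVec y' i|) :=
  steepness_nonincreasing_general n mA mB A B b d c P hP x₀ hx₀ y hy hcy α hα x₁ hx₁ y' hy'
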